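/- Let X be a vector space and Y_ρ a ρ-complete convex modular space satisfying the Δ₂-condition with constant τ. Let α: X × X → [0,∞) satisfy φ̃(x,y) := ∑_{j≥1} (τ²/2)ʲ α(x/2ʲ, y/2ʲ) < ∞, τⁿα(x/2ⁿ, y/2ⁿ) → 0, ψ(x,y) := ∑_{j≥1} (τ³/2)ʲ α(x/2ʲ, y/2ʲ) < ∞, and τ^{2n}α(x/2ⁿ, y/2ⁿ) → 0 for all x,y. Suppose φ: X × X → Y_ρ satisfies φ(x,0) = φ(0,z) = 0 and ρ(φ(x+y,z+w) + φ(x−y,z−w) − 2φ(x,z) − 2φ(x,w)) ≤ α(x,y)α(z,w) for all x,y,z,w. Then there exists a unique additive-quadratic mapping H: X × X → Y_ρ with ρ(φ(x,z) − H(x,z)) ≤ min{(1/2)φ̃(x,x)α(z,0), (1/(2τ))ψ(z,z)α(x,0)} for all x,z ∈ X. -/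

import Mathlib

section helpers
variable {Y : Type*} [AddCommGroup Y] [Module ℝ Y]
variable {ρ : Y → ℝ} {τ : ℝ}

private lemma rho_neg (hsym : ∀ (a : ℝ) (u : Y), |a| = 1 → ρ (a • u) = ρ u) (u : Y) :
    ρ (-u) = ρ u := by
  have := hsym (-1) u (by norm_num)
  simpa using this

private lemma quasi (hconv : ∀ (a b : ℝ) (u v : Y), 0 ≤ a → 0 ≤ b → a + b = 1 →
      ρ (a • u + b • v) ≤ a * ρ u + b * ρ v)
    (hΔ₂ : ∀ u : Y, ρ (2 • u) ≤ τ * ρ u) (u v : Y) :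
    ρ (u + v) ≤ τ / 2 * (ρ u + ρ v) := by
  have h := hconv (1/2) (1/2) ((2:ℝ) • u) ((2:ℝ) • v) (by norm_num) (by norm_num) (by norm_num)
  have e1 : (1/2 : ℝ) • ((2:ℝ) • u) = u := by rw [smul_smul]; norm_num
  have e2 : (1/2 : ℝ) • ((2:ℝ) • v) = v := by rw [smul_smul]; norm_num
  rw [e1, e2] at h
  have d1 : ρ ((2:ℝ) • u) ≤ τ * ρ u := by
    have : (2:ℝ) • u = 2 • u := by rw [two_smul, two_smul]
    rw [this]; exact hΔ₂ u
  have d2 : ρ ((2:ℝ) • v) ≤ τ * ρ v := by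
    have : (2:ℝ) • v = 2 • v := by rw [two_smul, two_smul]
    rw [this]; exact hΔ₂ v
  nlinarith [h]

private lemma rho_two_pow (hconv : ∀ (a b : ℝ) (u v : Y), 0 ≤ a → 0 ≤ b → a + b = 1 →
      ρ (a • u + b • v) ≤ a * ρ u + b * ρ v)
    (hΔ₂ : ∀ u : Y, ρ (2 • u) ≤ τ * ρ u) (hτ : 2 ≤ τ) :
    ∀ (n : ℕ) (u : Y), ρ ((2 ^ n : ℝ) • u) ≤ τ ^ n * ρ u := by
  intro n
  induction n with
  | zero => intro u; simp
  | succ n ih =>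
    intro u
    have e : ((2:ℝ) ^ (n+1)) • u = (2:ℝ) • ((2:ℝ)^n • u) := by
      rw [smul_smul]; ring_nf
    rw [e]
    have h2 : ρ ((2:ℝ) • ((2:ℝ)^n • u)) ≤ τ * ρ ((2:ℝ)^n • u) := by
      have : (2:ℝ) • ((2:ℝ)^n • u) = 2 • ((2:ℝ)^n • u) := by rw [two_smul, two_smul]
      rw [this]; exact hΔ₂ _
    calc ρ ((2:ℝ) • ((2:ℝ)^n • u)) ≤ τ * ρ ((2:ℝ)^n • u) := h2
      _ ≤ τ * (τ ^ n * ρ u) := by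
          apply mul_le_mul_of_nonneg_left (ih u) (by linarith)
      _ = τ ^ (n+1) * ρ u := by ring

private lemma rho_sum_range (hzero0 : ρ 0 = 0)
    (hquasi : ∀ u v : Y, ρ (u + v) ≤ τ / 2 * (ρ u + ρ v))
    (hτ : 2 ≤ τ) :
    ∀ (n : ℕ) (v : ℕ → Y),
      ρ (∑ i ∈ Finset.range n, v i) ≤ ∑ i ∈ Finset.range n, (τ/2)^(i+1) * ρ (v i) := by
  intro n
  induction n with
  | zero => intro v; simpa using le_of_eq hzero0
  | succ n ih =>
    intro v
    rw [Finset.sum_range_succ' v, Finset.sum_range_succ' (fun i => (τ/2)^(i+1) * ρ (v i))]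
    have h1 := hquasi (∑ i ∈ Finset.range n, v (i+1)) (v 0)
    have h2 := ih (fun i => v (i+1))
    have hτ2 : (1:ℝ) ≤ τ/2 := by linarith
    calc ρ (∑ i ∈ Finset.range n, v (i+1) + v 0)
        ≤ τ/2 * (ρ (∑ i ∈ Finset.range n, v (i+1)) + ρ (v 0)) := h1
      _ ≤ τ/2 * ((∑ i ∈ Finset.range n, (τ/2)^(i+1) * ρ (v (i+1))) + ρ (v 0)) := by
          apply mul_le_mul_of_nonneg_left _ (by linarith)
          exact add_le_add_left h2 _
      _ ≤ (∑ i ∈ Finset.range n, (τ/2)^(i+1+1) * ρ (v (i+1))) + (τ/2)^(0+1) * ρ (v 0) := by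
          rw [mul_add, Finset.mul_sum]
          apply add_le_add
          · apply Finset.sum_le_sum
            intro i _
            rw [← mul_assoc, ← pow_succ']
          · simp
end helpers

private lemma master {τ : ℝ} (hτ : 2 ≤ τ) (a b c d : ℕ) (hac : a ≤ c) (hbd : b ≤ d)
    (h : a + d ≤ c + b) : τ ^ a / 2 ^ b ≤ τ ^ c / 2 ^ d := by
  have hτ0 : (0:ℝ) < τ := by linarith
  rw [div_le_div_iff₀ (by positivity) (by positivity)]
  have e1 : (2:ℝ) ^ d = 2 ^ b * 2 ^ (d - b) := by rw [← pow_add]; congr 1; omega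
  have e2 : τ ^ c = τ ^ a * τ ^ (c - a) := by rw [← pow_add]; congr 1; omega
  rw [e1, e2]
  have key : (2:ℝ) ^ (d - b) ≤ τ ^ (c - a) := by
    calc (2:ℝ) ^ (d-b) ≤ (2:ℝ) ^ (c-a) := by
          apply pow_le_pow_right₀ (by norm_num) (by omega)
      _ ≤ τ ^ (c-a) := by apply pow_le_pow_left₀ (by norm_num) hτ
  calc τ ^ a * (2 ^ b * 2 ^ (d-b)) = τ ^ a * 2 ^ (d-b) * 2 ^ b := by ring
    _ ≤ τ ^ a * τ ^ (c-a) * 2 ^ b := by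
        gcongr

section pw
variable {τ : ℝ} (hτ : 2 ≤ τ)
include hτ

private lemma pw1 (m i : ℕ) : (τ/2)^(i+1) * τ^(m+i) ≤ (τ^2/2)^(m+i+1) := by
  have e1 : (τ/2)^(i+1) * τ^(m+i) = τ^((i+1)+(m+i)) / 2^(i+1) := by
    rw [div_pow, pow_add]; ring
  have e2 : (τ^2/2)^(m+i+1) = τ^(2*(m+i+1)) / 2^(m+i+1) := by rw [div_pow, pow_mul]
  rw [e1, e2]; exact master hτ _ _ _ _ (by omega) (by omega) (by omega)

private lemma pw2 (k : ℕ) : (τ/2)^(k+2) * τ^k ≤ (1/2) * (τ^2/2)^(k+1) := by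
  have e1 : (τ/2)^(k+2) * τ^k = τ^((k+2)+k) / 2^(k+2) := by
    rw [div_pow, pow_add]; ring
  have e2 : (1/2 : ℝ) * (τ^2/2)^(k+1) = τ^(2*(k+1)) / 2^(k+1+1) := by
    rw [div_pow, pow_mul, pow_succ]; ring
  rw [e1, e2]; exact master hτ _ _ _ _ (by omega) (by omega) (by omega)

private lemma pw3 (m i : ℕ) : (τ/2)^(i+1) * τ^(2*(m+i)) ≤ (τ^3/2)^(m+i+1) := by
  have e1 : (τ/2)^(i+1) * τ^(2*(m+i)) = τ^((i+1)+2*(m+i)) / 2^(i+1) := by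
    rw [div_pow, pow_add]; ring
  have e2 : (τ^3/2)^(m+i+1) = τ^(3*(m+i+1)) / 2^(m+i+1) := by rw [div_pow, pow_mul]
  rw [e1, e2]; exact master hτ _ _ _ _ (by omega) (by omega) (by omega)

private lemma pw4 (k : ℕ) : (τ/2)^(k+2) * τ^(2*k) ≤ (1/(2*τ)) * (τ^3/2)^(k+1) := by
  have hτ0 : τ ≠ 0 := by intro h; rw [h] at hτ; norm_num at hτ
  have e1 : (τ/2)^(k+2) * τ^(2*k) = τ^((k+2)+2*k) / 2^(k+2) := by
    rw [div_pow, pow_add]; ring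
  have e2 : (1/(2*τ) : ℝ) * (τ^3/2)^(k+1) = τ^((k+2)+2*k) / 2^(k+2) := by
    rw [div_pow]
    field_simp
    ring
  rw [e1, e2]

private lemma pw5 (n j : ℕ) : τ^n * (τ^2/2)^(j+1) ≤ (τ^2/2)^(n+j+1) := by
  have e1 : τ^n * (τ^2/2)^(j+1) = τ^(n+2*(j+1)) / 2^(j+1) := by
    rw [div_pow, ← pow_mul, pow_add]; ring
  have e2 : (τ^2/2)^(n+j+1) = τ^(2*(n+j+1)) / 2^(n+j+1) := by rw [div_pow, pow_mul]
  rw [e1, e2]; exact master hτ _ _ _ _ (by omega) (by omega) (by omega)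

private lemma pw6 (n j : ℕ) : τ^(2*n) * (τ^3/2)^(j+1) ≤ (τ^3/2)^(n+j+1) := by
  have e1 : τ^(2*n) * (τ^3/2)^(j+1) = τ^(2*n+3*(j+1)) / 2^(j+1) := by
    rw [div_pow, ← pow_mul, pow_add]; ring
  have e2 : (τ^3/2)^(n+j+1) = τ^(3*(n+j+1)) / 2^(n+j+1) := by rw [div_pow, pow_mul]
  rw [e1, e2]; exact master hτ _ _ _ _ (by omega) (by omega) (by omega)

end pw

private lemma tail_summable {f : ℕ → ℝ} (hf : Summable f) (m : ℕ) :
    Summable (fun i => f (m + i)) := by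
  have := (summable_nat_add_iff m).mpr hf
  simpa [add_comm] using this

private lemma tail_tendsto (f : ℕ → ℝ) :
    Filter.Tendsto (fun m => ∑' i, f (m + i)) Filter.atTop (nhds 0) := by
  have := tendsto_sum_nat_add f
  simpa [add_comm] using this
set_option maxHeartbeats 2000000 in
theorem stmt16 {X Y : Type*} [AddCommGroup X] [Module ℝ X] [AddCommGroup Y] [Module ℝ Y]
    (ρ : Y → ℝ) (α : X → X → ℝ) (φ : X → X → Y) (τ : ℝ)
    (hzero : ∀ u : Y, ρ u = 0 ↔ u = 0)
    (hnonneg : ∀ u : Y, 0 ≤ ρ u)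
    (hsym : ∀ (a : ℝ) (u : Y), |a| = 1 → ρ (a • u) = ρ u)
    (hconv : ∀ (a b : ℝ) (u v : Y), 0 ≤ a → 0 ≤ b → a + b = 1 →
      ρ (a • u + b • v) ≤ a * ρ u + b * ρ v)
    (hcomplete : ∀ u : ℕ → Y,
      Filter.Tendsto (fun p : ℕ × ℕ => ρ (u p.1 - u p.2)) Filter.atTop (nhds 0) →
      ∃ l : Y, Filter.Tendsto (fun n => ρ (u n - l)) Filter.atTop (nhds 0))
    (hτ : 2 ≤ τ)
    (hΔ₂ : ∀ u : Y, ρ (2 • u) ≤ τ * ρ u)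
    (hα : ∀ x y, 0 ≤ α x y)
    (hsum1 : ∀ x y : X,
      Summable (fun j : ℕ =>
        (τ ^ 2 / 2) ^ (j + 1) * α ((1 / 2 ^ (j + 1) : ℝ) • x) ((1 / 2 ^ (j + 1) : ℝ) • y)))
    (hlim1 : ∀ x y : X,
      Filter.Tendsto (fun n : ℕ => τ ^ n * α ((1 / 2 ^ n : ℝ) • x) ((1 / 2 ^ n : ℝ) • y))
        Filter.atTop (nhds 0))
    (hsum2 : ∀ x y : X,
      Summable (fun j : ℕ =>
        (τ ^ 3 / 2) ^ (j + 1) * α ((1 / 2 ^ (j + 1) : ℝ) • x) ((1 / 2 ^ (j + 1) : ℝ) • y)))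
    (hlim2 : ∀ x y : X,
      Filter.Tendsto (fun n : ℕ => τ ^ (2 * n) * α ((1 / 2 ^ n : ℝ) • x) ((1 / 2 ^ n : ℝ) • y))
        Filter.atTop (nhds 0))
    (hzeroL : ∀ z : X, φ 0 z = 0) (hzeroR : ∀ x : X, φ x 0 = 0)
    (hineq : ∀ x y z w : X,
      ρ (φ (x + y) (z + w) + φ (x - y) (z - w) - 2 • φ x z - 2 • φ x w) ≤
        α x y * α z w) :
    ∃! H : X → X → Y,
      ((∀ x y z : X, H (x + y) z = H x z + H y z) ∧
      (∀ x z w : X, H x (z + w) + H x (z - w) = 2 • H x z + 2 • H x w)) ∧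
      (∀ x z : X, ρ (φ x z - H x z) ≤
        min ((1 / 2) * (∑' j : ℕ,
              (τ ^ 2 / 2) ^ (j + 1) * α ((1 / 2 ^ (j + 1) : ℝ) • x) ((1 / 2 ^ (j + 1) : ℝ) • x))
              * α z 0)
            ((1 / (2 * τ)) * (∑' j : ℕ,
              (τ ^ 3 / 2) ^ (j + 1) * α ((1 / 2 ^ (j + 1) : ℝ) • z) ((1 / 2 ^ (j + 1) : ℝ) • z))
              * α x 0)) := by
  classical
  have hτ0 : (0:ℝ) < τ := by linarith
  have hρ0 : ρ (0:Y) = 0 := (hzero 0).mpr rfl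
  have hneg : ∀ u : Y, ρ (-u) = ρ u := rho_neg hsym
  have hq : ∀ u v : Y, ρ (u + v) ≤ τ/2 * (ρ u + ρ v) := quasi hconv hΔ₂
  have hpow : ∀ (n : ℕ) (u : Y), ρ ((2^n : ℝ) • u) ≤ τ^n * ρ u := rho_two_pow hconv hΔ₂ hτ
  have hsumR : ∀ (n : ℕ) (v : ℕ → Y),
      ρ (∑ i ∈ Finset.range n, v i) ≤ ∑ i ∈ Finset.range n, (τ/2)^(i+1) * ρ (v i) :=
    rho_sum_range hρ0 hq hτ
  have nat2 : ∀ v : Y, (2 • v : Y) = (2:ℝ) • v := fun v => by rw [two_smul, two_smul]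
  -- scalar arithmetic on X
  have s1 : ∀ (k : ℕ) (x : X),
      (1/2^(k+1) : ℝ) • x + (1/2^(k+1) : ℝ) • x = (1/2^k : ℝ) • x := by
    intro k x
    rw [← add_smul]
    congr 1
    rw [pow_succ]
    field_simp
    ring
  have s2 : ∀ (n j : ℕ) (x : X),
      (1/2^(j+1) : ℝ) • ((1/2^n : ℝ) • x) = (1/2^(n+j+1) : ℝ) • x := by
    intro n j x
    rw [smul_smul]
    congr 1
    rw [div_mul_div_comm, one_mul, ← pow_add]
    congr 2
    omega
  -- generic limit-based zero test
  have tozero : ∀ (E : Y) (b : ℕ → ℝ), (∀ n, ρ E ≤ b n) →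
      Filter.Tendsto b Filter.atTop (nhds 0) → E = 0 := by
    intro E b hb hlim
    have h1 : ρ E ≤ 0 := ge_of_tendsto' hlim hb
    exact (hzero E).mp (le_antisymm h1 (hnonneg E))
  have qtend : ∀ (t s : ℕ → Y),
      Filter.Tendsto (fun n => ρ (t n)) Filter.atTop (nhds 0) →
      Filter.Tendsto (fun n => ρ (s n)) Filter.atTop (nhds 0) →
      Filter.Tendsto (fun n => ρ (t n + s n)) Filter.atTop (nhds 0) := by
    intro t s ht hs
    apply squeeze_zero (fun n => hnonneg _) (fun n => hq (t n) (s n))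
    have h1 : Filter.Tendsto (fun n => ρ (t n) + ρ (s n)) Filter.atTop (nhds 0) := by
      simpa using ht.add hs
    simpa using h1.const_mul (τ/2)
  -- step inequalities
  have step1 : ∀ (k : ℕ) (x z : X),
      ρ (φ ((1/2^k : ℝ) • x) z - (2:ℝ) • φ ((1/2^(k+1) : ℝ) • x) z) ≤
        α ((1/2^(k+1) : ℝ) • x) ((1/2^(k+1) : ℝ) • x) * α z 0 := by
    intro k x z
    have h := hineq ((1/2^(k+1) : ℝ) • x) ((1/2^(k+1) : ℝ) • x) z 0
    simp only [s1 k x, sub_self, hzeroL, hzeroR, add_zero, sub_zero, smul_zero, nat2] at h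
    exact h
  have diffg : ∀ (k : ℕ) (x z : X),
      ρ ((2^k : ℝ) • φ ((1/2^k : ℝ) • x) z - (2^(k+1) : ℝ) • φ ((1/2^(k+1) : ℝ) • x) z) ≤
        τ^k * (α ((1/2^(k+1) : ℝ) • x) ((1/2^(k+1) : ℝ) • x) * α z 0) := by
    intro k x z
    have e : (2^k : ℝ) • φ ((1/2^k : ℝ) • x) z - (2^(k+1) : ℝ) • φ ((1/2^(k+1) : ℝ) • x) z
        = (2^k : ℝ) • (φ ((1/2^k : ℝ) • x) z - (2:ℝ) • φ ((1/2^(k+1) : ℝ) • x) z) := by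
      rw [smul_sub, smul_smul, ← pow_succ]
    rw [e]
    calc ρ ((2^k : ℝ) • (φ ((1/2^k : ℝ) • x) z - (2:ℝ) • φ ((1/2^(k+1) : ℝ) • x) z))
        ≤ τ^k * ρ (φ ((1/2^k : ℝ) • x) z - (2:ℝ) • φ ((1/2^(k+1) : ℝ) • x) z) := hpow k _
      _ ≤ τ^k * (α ((1/2^(k+1) : ℝ) • x) ((1/2^(k+1) : ℝ) • x) * α z 0) :=
          mul_le_mul_of_nonneg_left (step1 k x z) (by positivity)
  have step1h : ∀ (k : ℕ) (x z : X),
      ρ (φ x ((1/2^k : ℝ) • z) - (4:ℝ) • φ x ((1/2^(k+1) : ℝ) • z)) ≤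
        α x 0 * α ((1/2^(k+1) : ℝ) • z) ((1/2^(k+1) : ℝ) • z) := by
    intro k x z
    have e4 : ∀ (a v : Y), a - 2 • v - 2 • v = a - (4:ℝ) • v := by
      intro a v
      have h4 : ((4:ℝ)) • v = (2:ℝ) • v + (2:ℝ) • v := by rw [← add_smul]; norm_num
      rw [h4, nat2]
      abel
    have h := hineq x 0 ((1/2^(k+1) : ℝ) • z) ((1/2^(k+1) : ℝ) • z)
    rw [e4] at h
    simp only [add_zero, sub_zero, s1 k z, sub_self, hzeroR] at h
    exact h
  have diffh : ∀ (k : ℕ) (x z : X),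
      ρ ((2^(2*k) : ℝ) • φ x ((1/2^k : ℝ) • z) - (2^(2*(k+1)) : ℝ) • φ x ((1/2^(k+1) : ℝ) • z)) ≤
        τ^(2*k) * (α x 0 * α ((1/2^(k+1) : ℝ) • z) ((1/2^(k+1) : ℝ) • z)) := by
    intro k x z
    have e : (2^(2*k) : ℝ) • φ x ((1/2^k : ℝ) • z) - (2^(2*(k+1)) : ℝ) • φ x ((1/2^(k+1) : ℝ) • z)
        = (2^(2*k) : ℝ) • (φ x ((1/2^k : ℝ) • z) - (4:ℝ) • φ x ((1/2^(k+1) : ℝ) • z)) := by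
      rw [smul_sub, smul_smul]
      have e2 : (2:ℝ)^(2*k) * 4 = 2^(2*(k+1)) := by
        have e3 : 2*(k+1) = 2*k+2 := by omega
        rw [e3, pow_add]; norm_num
      rw [e2]
    rw [e]
    calc ρ ((2^(2*k) : ℝ) • (φ x ((1/2^k : ℝ) • z) - (4:ℝ) • φ x ((1/2^(k+1) : ℝ) • z)))
        ≤ τ^(2*k) * ρ (φ x ((1/2^k : ℝ) • z) - (4:ℝ) • φ x ((1/2^(k+1) : ℝ) • z)) := hpow (2*k) _
      _ ≤ τ^(2*k) * (α x 0 * α ((1/2^(k+1) : ℝ) • z) ((1/2^(k+1) : ℝ) • z)) :=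
          mul_le_mul_of_nonneg_left (step1h k x z) (by positivity)
  -- existence of limits for the additive-side sequence
  have keyg : ∀ x z : X, ∃ l : Y, Filter.Tendsto
      (fun n => ρ ((2^n : ℝ) • φ ((1/2^n : ℝ) • x) z - l)) Filter.atTop (nhds 0) := by
    intro x z
    set u : ℕ → Y := fun n => (2^n : ℝ) • φ ((1/2^n : ℝ) • x) z with hu
    set F : ℕ → ℝ := fun j =>
      (τ^2/2)^(j+1) * α ((1/2^(j+1) : ℝ) • x) ((1/2^(j+1) : ℝ) • x) with hF
    have hFs : Summable F := hsum1 x x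
    have hFnn : ∀ j, 0 ≤ F j := by
      intro j; rw [hF]; exact mul_nonneg (by positivity) (hα _ _)
    have hA : 0 ≤ α z 0 := hα z 0
    have bnd : ∀ m K, ρ (u m - u (m+K)) ≤ (∑' i, F (m+i)) * α z 0 := by
      intro m K
      have tele : u m - u (m+K) = ∑ i ∈ Finset.range K, (u (m+i) - u (m+i+1)) := by
        have h := Finset.sum_range_sub' (fun i => u (m+i)) K
        simpa [add_assoc] using h.symm
      rw [tele]
      calc ρ (∑ i ∈ Finset.range K, (u (m+i) - u (m+i+1)))
          ≤ ∑ i ∈ Finset.range K, (τ/2)^(i+1) * ρ (u (m+i) - u (m+i+1)) := hsumR K _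
        _ ≤ ∑ i ∈ Finset.range K, (τ/2)^(i+1) *
              (τ^(m+i) * (α ((1/2^(m+i+1) : ℝ) • x) ((1/2^(m+i+1) : ℝ) • x) * α z 0)) := by
            apply Finset.sum_le_sum
            intro i _
            exact mul_le_mul_of_nonneg_left (diffg (m+i) x z) (by positivity)
        _ ≤ ∑ i ∈ Finset.range K, F (m+i) * α z 0 := by
            apply Finset.sum_le_sum
            intro i _
            rw [hF]
            calc (τ/2)^(i+1) * (τ^(m+i) *
                  (α ((1/2^(m+i+1) : ℝ) • x) ((1/2^(m+i+1) : ℝ) • x) * α z 0))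
                = ((τ/2)^(i+1) * τ^(m+i)) *
                  (α ((1/2^(m+i+1) : ℝ) • x) ((1/2^(m+i+1) : ℝ) • x) * α z 0) := by ring
              _ ≤ (τ^2/2)^(m+i+1) *
                  (α ((1/2^(m+i+1) : ℝ) • x) ((1/2^(m+i+1) : ℝ) • x) * α z 0) := by
                  exact mul_le_mul_of_nonneg_right (pw1 hτ m i)
                    (mul_nonneg (hα _ _) hA)
              _ = ((τ^2/2)^(m+i+1) *
                  α ((1/2^(m+i+1) : ℝ) • x) ((1/2^(m+i+1) : ℝ) • x)) * α z 0 := by ring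
        _ = (∑ i ∈ Finset.range K, F (m+i)) * α z 0 := by rw [Finset.sum_mul]
        _ ≤ (∑' i, F (m+i)) * α z 0 := by
            apply mul_le_mul_of_nonneg_right _ hA
            exact Summable.sum_le_tsum (Finset.range K) (fun i _ => hFnn _) (tail_summable hFs m)
    have symm : ∀ p : ℕ × ℕ, ρ (u p.1 - u p.2) ≤ (∑' i, F (min p.1 p.2 + i)) * α z 0 := by
      rintro ⟨p, q⟩
      rcases le_total p q with h | h
      · obtain ⟨K, rfl⟩ := Nat.exists_eq_add_of_le h
        rw [min_eq_left (by omega)]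
        exact bnd p K
      · obtain ⟨K, rfl⟩ := Nat.exists_eq_add_of_le h
        rw [min_eq_right (by omega)]
        have e : ρ (u (q+K) - u q) = ρ (u q - u (q+K)) := by rw [← hneg]; rw [neg_sub]
        rw [e]
        exact bnd q K
    have tmin : Filter.Tendsto (fun p : ℕ × ℕ => min p.1 p.2) Filter.atTop Filter.atTop := by
      rw [Filter.tendsto_atTop]
      intro b
      filter_upwards [Filter.eventually_ge_atTop (b, b)] with p hp
      exact le_min hp.1 hp.2
    have ttail : Filter.Tendsto (fun m => (∑' i, F (m+i)) * α z 0) Filter.atTop (nhds 0) := by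
      simpa using (tail_tendsto F).mul_const (α z 0)
    exact hcomplete u (squeeze_zero (fun p => hnonneg _) symm (ttail.comp tmin))
  -- existence of limits for the quadratic-side sequence
  have keyh : ∀ x z : X, ∃ l : Y, Filter.Tendsto
      (fun n => ρ ((2^(2*n) : ℝ) • φ x ((1/2^n : ℝ) • z) - l)) Filter.atTop (nhds 0) := by
    intro x z
    set u : ℕ → Y := fun n => (2^(2*n) : ℝ) • φ x ((1/2^n : ℝ) • z) with hu
    set F : ℕ → ℝ := fun j =>
      (τ^3/2)^(j+1) * α ((1/2^(j+1) : ℝ) • z) ((1/2^(j+1) : ℝ) • z) with hF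
    have hFs : Summable F := hsum2 z z
    have hFnn : ∀ j, 0 ≤ F j := by
      intro j; rw [hF]; exact mul_nonneg (by positivity) (hα _ _)
    have hA : 0 ≤ α x 0 := hα x 0
    have bnd : ∀ m K, ρ (u m - u (m+K)) ≤ (∑' i, F (m+i)) * α x 0 := by
      intro m K
      have tele : u m - u (m+K) = ∑ i ∈ Finset.range K, (u (m+i) - u (m+i+1)) := by
        have h := Finset.sum_range_sub' (fun i => u (m+i)) K
        simpa [add_assoc] using h.symm
      rw [tele]
      calc ρ (∑ i ∈ Finset.range K, (u (m+i) - u (m+i+1)))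
          ≤ ∑ i ∈ Finset.range K, (τ/2)^(i+1) * ρ (u (m+i) - u (m+i+1)) := hsumR K _
        _ ≤ ∑ i ∈ Finset.range K, (τ/2)^(i+1) *
              (τ^(2*(m+i)) * (α x 0 * α ((1/2^(m+i+1) : ℝ) • z) ((1/2^(m+i+1) : ℝ) • z))) := by
            apply Finset.sum_le_sum
            intro i _
            exact mul_le_mul_of_nonneg_left (diffh (m+i) x z) (by positivity)
        _ ≤ ∑ i ∈ Finset.range K, F (m+i) * α x 0 := by
            apply Finset.sum_le_sum
            intro i _
            rw [hF]
            calc (τ/2)^(i+1) * (τ^(2*(m+i)) *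
                  (α x 0 * α ((1/2^(m+i+1) : ℝ) • z) ((1/2^(m+i+1) : ℝ) • z)))
                = ((τ/2)^(i+1) * τ^(2*(m+i))) *
                  (α x 0 * α ((1/2^(m+i+1) : ℝ) • z) ((1/2^(m+i+1) : ℝ) • z)) := by ring
              _ ≤ (τ^3/2)^(m+i+1) *
                  (α x 0 * α ((1/2^(m+i+1) : ℝ) • z) ((1/2^(m+i+1) : ℝ) • z)) := by
                  exact mul_le_mul_of_nonneg_right (pw3 hτ m i)
                    (mul_nonneg hA (hα _ _))
              _ = ((τ^3/2)^(m+i+1) *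
                  α ((1/2^(m+i+1) : ℝ) • z) ((1/2^(m+i+1) : ℝ) • z)) * α x 0 := by ring
        _ = (∑ i ∈ Finset.range K, F (m+i)) * α x 0 := by rw [Finset.sum_mul]
        _ ≤ (∑' i, F (m+i)) * α x 0 := by
            apply mul_le_mul_of_nonneg_right _ hA
            exact Summable.sum_le_tsum (Finset.range K) (fun i _ => hFnn _) (tail_summable hFs m)
    have symm : ∀ p : ℕ × ℕ, ρ (u p.1 - u p.2) ≤ (∑' i, F (min p.1 p.2 + i)) * α x 0 := by
      rintro ⟨p, q⟩
      rcases le_total p q with h | h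
      · obtain ⟨K, rfl⟩ := Nat.exists_eq_add_of_le h
        rw [min_eq_left (by omega)]
        exact bnd p K
      · obtain ⟨K, rfl⟩ := Nat.exists_eq_add_of_le h
        rw [min_eq_right (by omega)]
        have e : ρ (u (q+K) - u q) = ρ (u q - u (q+K)) := by rw [← hneg]; rw [neg_sub]
        rw [e]
        exact bnd q K
    have tmin : Filter.Tendsto (fun p : ℕ × ℕ => min p.1 p.2) Filter.atTop Filter.atTop := by
      rw [Filter.tendsto_atTop]
      intro b
      filter_upwards [Filter.eventually_ge_atTop (b, b)] with p hp
      exact le_min hp.1 hp.2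
    have ttail : Filter.Tendsto (fun m => (∑' i, F (m+i)) * α x 0) Filter.atTop (nhds 0) := by
      simpa using (tail_tendsto F).mul_const (α x 0)
    exact hcomplete u (squeeze_zero (fun p => hnonneg _) symm (ttail.comp tmin))
  choose H hH using keyg
  choose Hh hHh using keyh
  have bound1 : ∀ x z : X, ρ (φ x z - H x z) ≤
      (1 / 2) * (∑' j : ℕ,
        (τ ^ 2 / 2) ^ (j + 1) * α ((1 / 2 ^ (j + 1) : ℝ) • x) ((1 / 2 ^ (j + 1) : ℝ) • x))
        * α z 0 := by
    intro x z
    set F : ℕ → ℝ := fun j =>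
      (τ ^ 2 / 2) ^ (j + 1) * α ((1 / 2 ^ (j + 1) : ℝ) • x) ((1 / 2 ^ (j + 1) : ℝ) • x) with hF
    have hFs : Summable F := hsum1 x x
    have hFnn : ∀ j, 0 ≤ F j := by
      intro j; rw [hF]; exact mul_nonneg (by positivity) (hα _ _)
    have hA : 0 ≤ α z 0 := hα z 0
    have idn : ∀ n : ℕ, φ x z - H x z =
        ((2^n : ℝ) • φ ((1/2^n : ℝ) • x) z - H x z) +
        ∑ k ∈ Finset.range n,
          ((2^k : ℝ) • φ ((1/2^k : ℝ) • x) z - (2^(k+1) : ℝ) • φ ((1/2^(k+1) : ℝ) • x) z) := by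
      intro n
      rw [Finset.sum_range_sub' (fun k => (2^k : ℝ) • φ ((1/2^k : ℝ) • x) z) n]
      simp only [pow_zero]
      norm_num
    have main : ∀ n : ℕ, ρ (φ x z - H x z) ≤
        (τ/2) * ρ ((2^n : ℝ) • φ ((1/2^n : ℝ) • x) z - H x z)
          + (1/2) * (∑' j, F j) * α z 0 := by
      intro n
      have hS : (τ/2) * ρ (∑ k ∈ Finset.range n,
          ((2^k : ℝ) • φ ((1/2^k : ℝ) • x) z - (2^(k+1) : ℝ) • φ ((1/2^(k+1) : ℝ) • x) z))
          ≤ (1/2) * (∑' j, F j) * α z 0 := by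
        calc (τ/2) * ρ (∑ k ∈ Finset.range n,
            ((2^k : ℝ) • φ ((1/2^k : ℝ) • x) z - (2^(k+1) : ℝ) • φ ((1/2^(k+1) : ℝ) • x) z))
            ≤ (τ/2) * ∑ k ∈ Finset.range n, (τ/2)^(k+1) *
                ρ ((2^k : ℝ) • φ ((1/2^k : ℝ) • x) z - (2^(k+1) : ℝ) • φ ((1/2^(k+1) : ℝ) • x) z) := by
              exact mul_le_mul_of_nonneg_left (hsumR n _) (by positivity)
          _ ≤ (τ/2) * ∑ k ∈ Finset.range n, (τ/2)^(k+1) *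
                (τ^k * (α ((1/2^(k+1) : ℝ) • x) ((1/2^(k+1) : ℝ) • x) * α z 0)) := by
              apply mul_le_mul_of_nonneg_left _ (by positivity)
              apply Finset.sum_le_sum
              intro k _
              exact mul_le_mul_of_nonneg_left (diffg k x z) (by positivity)
          _ = ∑ k ∈ Finset.range n, ((τ/2)^(k+2) * τ^k) *
                (α ((1/2^(k+1) : ℝ) • x) ((1/2^(k+1) : ℝ) • x) * α z 0) := by
              rw [Finset.mul_sum]
              apply Finset.sum_congr rfl
              intro k _
              rw [pow_succ]
              ring
          _ ≤ ∑ k ∈ Finset.range n, ((1/2) * (τ^2/2)^(k+1)) *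
                (α ((1/2^(k+1) : ℝ) • x) ((1/2^(k+1) : ℝ) • x) * α z 0) := by
              apply Finset.sum_le_sum
              intro k _
              exact mul_le_mul_of_nonneg_right (pw2 hτ k) (mul_nonneg (hα _ _) hA)
          _ = (1/2) * ((∑ k ∈ Finset.range n, F k) * α z 0) := by
              rw [Finset.sum_mul, Finset.mul_sum]
              apply Finset.sum_congr rfl
              intro k _
              rw [hF]
              ring
          _ ≤ (1/2) * ((∑' j, F j) * α z 0) := by
              apply mul_le_mul_of_nonneg_left _ (by norm_num)
              exact mul_le_mul_of_nonneg_right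
                (Summable.sum_le_tsum (Finset.range n) (fun i _ => hFnn _) hFs) hA
          _ = (1/2) * (∑' j, F j) * α z 0 := by ring
      calc ρ (φ x z - H x z)
          = ρ (((2^n : ℝ) • φ ((1/2^n : ℝ) • x) z - H x z) +
            ∑ k ∈ Finset.range n,
              ((2^k : ℝ) • φ ((1/2^k : ℝ) • x) z - (2^(k+1) : ℝ) • φ ((1/2^(k+1) : ℝ) • x) z)) := by
            rw [← idn n]
        _ ≤ (τ/2) * (ρ ((2^n : ℝ) • φ ((1/2^n : ℝ) • x) z - H x z) +
              ρ (∑ k ∈ Finset.range n,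
              ((2^k : ℝ) • φ ((1/2^k : ℝ) • x) z - (2^(k+1) : ℝ) • φ ((1/2^(k+1) : ℝ) • x) z))) :=
            hq _ _
        _ = (τ/2) * ρ ((2^n : ℝ) • φ ((1/2^n : ℝ) • x) z - H x z) +
              (τ/2) * ρ (∑ k ∈ Finset.range n,
              ((2^k : ℝ) • φ ((1/2^k : ℝ) • x) z - (2^(k+1) : ℝ) • φ ((1/2^(k+1) : ℝ) • x) z)) := by
            ring
        _ ≤ (τ/2) * ρ ((2^n : ℝ) • φ ((1/2^n : ℝ) • x) z - H x z)
              + (1/2) * (∑' j, F j) * α z 0 := by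
            exact add_le_add_right hS _
    have tend : Filter.Tendsto (fun n =>
        (τ/2) * ρ ((2^n : ℝ) • φ ((1/2^n : ℝ) • x) z - H x z)
          + (1/2) * (∑' j, F j) * α z 0) Filter.atTop
        (nhds ((1/2) * (∑' j, F j) * α z 0)) := by
      have h1 := (hH x z).const_mul (τ/2)
      have h2 := h1.add_const ((1/2) * (∑' j, F j) * α z 0)
      simpa using h2
    exact ge_of_tendsto' tend main
  have bound2 : ∀ x z : X, ρ (φ x z - Hh x z) ≤
      (1 / (2 * τ)) * (∑' j : ℕ,
        (τ ^ 3 / 2) ^ (j + 1) * α ((1 / 2 ^ (j + 1) : ℝ) • z) ((1 / 2 ^ (j + 1) : ℝ) • z))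
        * α x 0 := by
    intro x z
    set F : ℕ → ℝ := fun j =>
      (τ ^ 3 / 2) ^ (j + 1) * α ((1 / 2 ^ (j + 1) : ℝ) • z) ((1 / 2 ^ (j + 1) : ℝ) • z) with hF
    have hFs : Summable F := hsum2 z z
    have hFnn : ∀ j, 0 ≤ F j := by
      intro j; rw [hF]; exact mul_nonneg (by positivity) (hα _ _)
    have hA : 0 ≤ α x 0 := hα x 0
    have idn : ∀ n : ℕ, φ x z - Hh x z =
        ((2^(2*n) : ℝ) • φ x ((1/2^n : ℝ) • z) - Hh x z) +
        ∑ k ∈ Finset.range n,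
          ((2^(2*k) : ℝ) • φ x ((1/2^k : ℝ) • z) - (2^(2*(k+1)) : ℝ) • φ x ((1/2^(k+1) : ℝ) • z)) := by
      intro n
      rw [Finset.sum_range_sub' (fun k => (2^(2*k) : ℝ) • φ x ((1/2^k : ℝ) • z)) n]
      norm_num
    have main : ∀ n : ℕ, ρ (φ x z - Hh x z) ≤
        (τ/2) * ρ ((2^(2*n) : ℝ) • φ x ((1/2^n : ℝ) • z) - Hh x z)
          + (1/(2*τ)) * (∑' j, F j) * α x 0 := by
      intro n
      have hS : (τ/2) * ρ (∑ k ∈ Finset.range n,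
          ((2^(2*k) : ℝ) • φ x ((1/2^k : ℝ) • z) - (2^(2*(k+1)) : ℝ) • φ x ((1/2^(k+1) : ℝ) • z)))
          ≤ (1/(2*τ)) * (∑' j, F j) * α x 0 := by
        calc (τ/2) * ρ (∑ k ∈ Finset.range n,
            ((2^(2*k) : ℝ) • φ x ((1/2^k : ℝ) • z) - (2^(2*(k+1)) : ℝ) • φ x ((1/2^(k+1) : ℝ) • z)))
            ≤ (τ/2) * ∑ k ∈ Finset.range n, (τ/2)^(k+1) *
                ρ ((2^(2*k) : ℝ) • φ x ((1/2^k : ℝ) • z) - (2^(2*(k+1)) : ℝ) • φ x ((1/2^(k+1) : ℝ) • z)) := by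
              exact mul_le_mul_of_nonneg_left (hsumR n _) (by positivity)
          _ ≤ (τ/2) * ∑ k ∈ Finset.range n, (τ/2)^(k+1) *
                (τ^(2*k) * (α x 0 * α ((1/2^(k+1) : ℝ) • z) ((1/2^(k+1) : ℝ) • z))) := by
              apply mul_le_mul_of_nonneg_left _ (by positivity)
              apply Finset.sum_le_sum
              intro k _
              exact mul_le_mul_of_nonneg_left (diffh k x z) (by positivity)
          _ = ∑ k ∈ Finset.range n, ((τ/2)^(k+2) * τ^(2*k)) *
                (α x 0 * α ((1/2^(k+1) : ℝ) • z) ((1/2^(k+1) : ℝ) • z)) := by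
              rw [Finset.mul_sum]
              apply Finset.sum_congr rfl
              intro k _
              rw [pow_succ]
              ring
          _ ≤ ∑ k ∈ Finset.range n, ((1/(2*τ)) * (τ^3/2)^(k+1)) *
                (α x 0 * α ((1/2^(k+1) : ℝ) • z) ((1/2^(k+1) : ℝ) • z)) := by
              apply Finset.sum_le_sum
              intro k _
              exact mul_le_mul_of_nonneg_right (pw4 hτ k) (mul_nonneg hA (hα _ _))
          _ = (1/(2*τ)) * ((∑ k ∈ Finset.range n, F k) * α x 0) := by
              rw [Finset.sum_mul, Finset.mul_sum]
              apply Finset.sum_congr rfl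
              intro k _
              rw [hF]
              ring
          _ ≤ (1/(2*τ)) * ((∑' j, F j) * α x 0) := by
              apply mul_le_mul_of_nonneg_left _ (by positivity)
              exact mul_le_mul_of_nonneg_right
                (Summable.sum_le_tsum (Finset.range n) (fun i _ => hFnn _) hFs) hA
          _ = (1/(2*τ)) * (∑' j, F j) * α x 0 := by ring
      calc ρ (φ x z - Hh x z)
          = ρ (((2^(2*n) : ℝ) • φ x ((1/2^n : ℝ) • z) - Hh x z) +
            ∑ k ∈ Finset.range n,
              ((2^(2*k) : ℝ) • φ x ((1/2^k : ℝ) • z) - (2^(2*(k+1)) : ℝ) • φ x ((1/2^(k+1) : ℝ) • z))) := by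
            rw [← idn n]
        _ ≤ (τ/2) * (ρ ((2^(2*n) : ℝ) • φ x ((1/2^n : ℝ) • z) - Hh x z) +
              ρ (∑ k ∈ Finset.range n,
              ((2^(2*k) : ℝ) • φ x ((1/2^k : ℝ) • z) - (2^(2*(k+1)) : ℝ) • φ x ((1/2^(k+1) : ℝ) • z)))) :=
            hq _ _
        _ = (τ/2) * ρ ((2^(2*n) : ℝ) • φ x ((1/2^n : ℝ) • z) - Hh x z) +
              (τ/2) * ρ (∑ k ∈ Finset.range n,
              ((2^(2*k) : ℝ) • φ x ((1/2^k : ℝ) • z) - (2^(2*(k+1)) : ℝ) • φ x ((1/2^(k+1) : ℝ) • z))) := by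
            ring
        _ ≤ (τ/2) * ρ ((2^(2*n) : ℝ) • φ x ((1/2^n : ℝ) • z) - Hh x z)
              + (1/(2*τ)) * (∑' j, F j) * α x 0 := by
            exact add_le_add_right hS _
    have tend : Filter.Tendsto (fun n =>
        (τ/2) * ρ ((2^(2*n) : ℝ) • φ x ((1/2^n : ℝ) • z) - Hh x z)
          + (1/(2*τ)) * (∑' j, F j) * α x 0) Filter.atTop
        (nhds ((1/(2*τ)) * (∑' j, F j) * α x 0)) := by
      have h1 := (hHh x z).const_mul (τ/2)
      have h2 := h1.add_const ((1/(2*τ)) * (∑' j, F j) * α x 0)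
      simpa using h2
    exact ge_of_tendsto' tend main
  -- limits of vanishing sequences
  have H0 : ∀ z : X, H 0 z = 0 := by
    intro z
    have h1 : Filter.Tendsto (fun n : ℕ => ρ ((0:Y) - H 0 z)) Filter.atTop (nhds 0) := by
      simpa [hzeroL] using hH 0 z
    have h2 : ρ ((0:Y) - H 0 z) = 0 := tendsto_nhds_unique tendsto_const_nhds h1
    have h3 := (hzero _).mp h2
    rwa [zero_sub, neg_eq_zero] at h3
  have Hx0 : ∀ x : X, H x 0 = 0 := by
    intro x
    have h1 : Filter.Tendsto (fun n : ℕ => ρ ((0:Y) - H x 0)) Filter.atTop (nhds 0) := by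
      simpa [hzeroR] using hH x 0
    have h2 : ρ ((0:Y) - H x 0) = 0 := tendsto_nhds_unique tendsto_const_nhds h1
    have h3 := (hzero _).mp h2
    rwa [zero_sub, neg_eq_zero] at h3
  have Hhx0 : ∀ x : X, Hh x 0 = 0 := by
    intro x
    have h1 : Filter.Tendsto (fun n : ℕ => ρ ((0:Y) - Hh x 0)) Filter.atTop (nhds 0) := by
      simpa [hzeroR] using hHh x 0
    have h2 : ρ ((0:Y) - Hh x 0) = 0 := tendsto_nhds_unique tendsto_const_nhds h1
    have h3 := (hzero _).mp h2
    rwa [zero_sub, neg_eq_zero] at h3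
  -- convergence facts in convenient form
  have hHrev : ∀ (x z : X), Filter.Tendsto
      (fun n => ρ (H x z - (2^n : ℝ) • φ ((1/2^n : ℝ) • x) z)) Filter.atTop (nhds 0) := by
    intro x z
    have e : ∀ n : ℕ, ρ (H x z - (2^n : ℝ) • φ ((1/2^n : ℝ) • x) z)
        = ρ ((2^n : ℝ) • φ ((1/2^n : ℝ) • x) z - H x z) := fun n => by rw [← hneg, neg_sub]
    simp only [e]
    exact hH x z
  have hHhrev : ∀ (x z : X), Filter.Tendsto
      (fun n => ρ (Hh x z - (2^(2*n) : ℝ) • φ x ((1/2^n : ℝ) • z))) Filter.atTop (nhds 0) := by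
    intro x z
    have e : ∀ n : ℕ, ρ (Hh x z - (2^(2*n) : ℝ) • φ x ((1/2^n : ℝ) • z))
        = ρ ((2^(2*n) : ℝ) • φ x ((1/2^n : ℝ) • z) - Hh x z) := fun n => by rw [← hneg, neg_sub]
    simp only [e]
    exact hHh x z
  have hH2 : ∀ (x z : X), Filter.Tendsto
      (fun n => ρ (2 • ((2^n : ℝ) • φ ((1/2^n : ℝ) • x) z) - 2 • H x z))
      Filter.atTop (nhds 0) := by
    intro x z
    have hb : ∀ n : ℕ, ρ (2 • ((2^n : ℝ) • φ ((1/2^n : ℝ) • x) z) - 2 • H x z)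
        ≤ τ * ρ ((2^n : ℝ) • φ ((1/2^n : ℝ) • x) z - H x z) := by
      intro n
      rw [← smul_sub]
      exact hΔ₂ _
    apply squeeze_zero (fun n => hnonneg _) hb
    simpa using (hH x z).const_mul τ
  have hHh2 : ∀ (x z : X), Filter.Tendsto
      (fun n => ρ (2 • ((2^(2*n) : ℝ) • φ x ((1/2^n : ℝ) • z)) - 2 • Hh x z))
      Filter.atTop (nhds 0) := by
    intro x z
    have hb : ∀ n : ℕ, ρ (2 • ((2^(2*n) : ℝ) • φ x ((1/2^n : ℝ) • z)) - 2 • Hh x z)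
        ≤ τ * ρ ((2^(2*n) : ℝ) • φ x ((1/2^n : ℝ) • z) - Hh x z) := by
      intro n
      rw [← smul_sub]
      exact hΔ₂ _
    apply squeeze_zero (fun n => hnonneg _) hb
    simpa using (hHh x z).const_mul τ
  -- Jensen equation for H in the first variable
  have jensen : ∀ x y z : X, H (x+y) z + H (x-y) z = 2 • H x z := by
    intro x y z
    have T4 : Filter.Tendsto (fun n => ρ ((2^n : ℝ) •
        (φ ((1/2^n : ℝ) • x + (1/2^n : ℝ) • y) z + φ ((1/2^n : ℝ) • x - (1/2^n : ℝ) • y) z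
          - 2 • φ ((1/2^n : ℝ) • x) z))) Filter.atTop (nhds 0) := by
      have hb : ∀ n : ℕ, ρ ((2^n : ℝ) •
          (φ ((1/2^n : ℝ) • x + (1/2^n : ℝ) • y) z + φ ((1/2^n : ℝ) • x - (1/2^n : ℝ) • y) z
            - 2 • φ ((1/2^n : ℝ) • x) z))
          ≤ τ^n * α ((1/2^n : ℝ) • x) ((1/2^n : ℝ) • y) * α z 0 := by
        intro n
        have hs := hineq ((1/2^n : ℝ) • x) ((1/2^n : ℝ) • y) z 0
        simp only [add_zero, sub_zero, hzeroR, smul_zero] at hs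
        calc ρ ((2^n : ℝ) • (φ ((1/2^n : ℝ) • x + (1/2^n : ℝ) • y) z
              + φ ((1/2^n : ℝ) • x - (1/2^n : ℝ) • y) z - 2 • φ ((1/2^n : ℝ) • x) z))
            ≤ τ^n * ρ (φ ((1/2^n : ℝ) • x + (1/2^n : ℝ) • y) z
              + φ ((1/2^n : ℝ) • x - (1/2^n : ℝ) • y) z - 2 • φ ((1/2^n : ℝ) • x) z) := hpow n _
          _ ≤ τ^n * (α ((1/2^n : ℝ) • x) ((1/2^n : ℝ) • y) * α z 0) :=
              mul_le_mul_of_nonneg_left hs (by positivity)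
          _ = τ^n * α ((1/2^n : ℝ) • x) ((1/2^n : ℝ) • y) * α z 0 := by ring
      apply squeeze_zero (fun n => hnonneg _) hb
      simpa using (hlim1 x y).mul_const (α z 0)
    have Tsum := qtend _ _ (qtend _ _ (qtend _ _ (hHrev (x+y) z) (hHrev (x-y) z))
      (hH2 x z)) T4
    have efin : (fun n : ℕ => ρ (
        (H (x+y) z - (2^n : ℝ) • φ ((1/2^n : ℝ) • (x+y)) z) +
        (H (x-y) z - (2^n : ℝ) • φ ((1/2^n : ℝ) • (x-y)) z) +
        (2 • ((2^n : ℝ) • φ ((1/2^n : ℝ) • x) z) - 2 • H x z) +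
        ((2^n : ℝ) • (φ ((1/2^n : ℝ) • x + (1/2^n : ℝ) • y) z
          + φ ((1/2^n : ℝ) • x - (1/2^n : ℝ) • y) z - 2 • φ ((1/2^n : ℝ) • x) z))))
        = fun _ : ℕ => ρ (H (x+y) z + H (x-y) z - 2 • H x z) := by
      funext n
      congr 1
      simp only [smul_add, smul_sub, smul_comm ((2:ℝ)^n) (2:ℕ)]
      abel
    rw [efin] at Tsum
    have hE : H (x+y) z + H (x-y) z - 2 • H x z = 0 := by
      have h2 : ρ (H (x+y) z + H (x-y) z - 2 • H x z) = 0 :=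
        tendsto_nhds_unique tendsto_const_nhds Tsum
      exact (hzero _).mp h2
    have := sub_eq_zero.mp hE
    exact this
  -- quadratic equation for H in the second variable
  have quadH : ∀ x z w : X, H x (z+w) + H x (z-w) = 2 • H x z + 2 • H x w := by
    intro x z w
    have T5 : Filter.Tendsto (fun n => ρ ((2^n : ℝ) •
        (φ ((1/2^n : ℝ) • x) (z+w) + φ ((1/2^n : ℝ) • x) (z-w)
          - 2 • φ ((1/2^n : ℝ) • x) z - 2 • φ ((1/2^n : ℝ) • x) w))) Filter.atTop (nhds 0) := by
      have hb : ∀ n : ℕ, ρ ((2^n : ℝ) •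
          (φ ((1/2^n : ℝ) • x) (z+w) + φ ((1/2^n : ℝ) • x) (z-w)
            - 2 • φ ((1/2^n : ℝ) • x) z - 2 • φ ((1/2^n : ℝ) • x) w))
          ≤ τ^n * α ((1/2^n : ℝ) • x) ((1/2^n : ℝ) • (0:X)) * α z w := by
        intro n
        have hs := hineq ((1/2^n : ℝ) • x) 0 z w
        simp only [add_zero, sub_zero] at hs
        calc ρ ((2^n : ℝ) • (φ ((1/2^n : ℝ) • x) (z+w) + φ ((1/2^n : ℝ) • x) (z-w)
              - 2 • φ ((1/2^n : ℝ) • x) z - 2 • φ ((1/2^n : ℝ) • x) w))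
            ≤ τ^n * ρ (φ ((1/2^n : ℝ) • x) (z+w) + φ ((1/2^n : ℝ) • x) (z-w)
              - 2 • φ ((1/2^n : ℝ) • x) z - 2 • φ ((1/2^n : ℝ) • x) w) := hpow n _
          _ ≤ τ^n * (α ((1/2^n : ℝ) • x) 0 * α z w) :=
              mul_le_mul_of_nonneg_left hs (by positivity)
          _ = τ^n * α ((1/2^n : ℝ) • x) ((1/2^n : ℝ) • (0:X)) * α z w := by
              rw [smul_zero]; ring
      apply squeeze_zero (fun n => hnonneg _) hb
      simpa using (hlim1 x 0).mul_const (α z w)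
    have Tsum := qtend _ _ (qtend _ _ (qtend _ _ (qtend _ _
      (hHrev x (z+w)) (hHrev x (z-w))) (hH2 x z)) (hH2 x w)) T5
    have efin : (fun n : ℕ => ρ (
        (H x (z+w) - (2^n : ℝ) • φ ((1/2^n : ℝ) • x) (z+w)) +
        (H x (z-w) - (2^n : ℝ) • φ ((1/2^n : ℝ) • x) (z-w)) +
        (2 • ((2^n : ℝ) • φ ((1/2^n : ℝ) • x) z) - 2 • H x z) +
        (2 • ((2^n : ℝ) • φ ((1/2^n : ℝ) • x) w) - 2 • H x w) +
        ((2^n : ℝ) • (φ ((1/2^n : ℝ) • x) (z+w) + φ ((1/2^n : ℝ) • x) (z-w)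
          - 2 • φ ((1/2^n : ℝ) • x) z - 2 • φ ((1/2^n : ℝ) • x) w))))
        = fun _ : ℕ => ρ (H x (z+w) + H x (z-w) - (2 • H x z + 2 • H x w)) := by
      funext n
      congr 1
      simp only [smul_add, smul_sub, smul_comm ((2:ℝ)^n) (2:ℕ)]
      abel
    rw [efin] at Tsum
    have hE : H x (z+w) + H x (z-w) - (2 • H x z + 2 • H x w) = 0 :=
      (hzero _).mp (tendsto_nhds_unique tendsto_const_nhds Tsum)
    exact sub_eq_zero.mp hE
  -- quadratic equation for Hh in the second variable
  have quadHh : ∀ x z w : X, Hh x (z+w) + Hh x (z-w) = 2 • Hh x z + 2 • Hh x w := by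
    intro x z w
    have T5 : Filter.Tendsto (fun n => ρ ((2^(2*n) : ℝ) •
        (φ x ((1/2^n : ℝ) • z + (1/2^n : ℝ) • w) + φ x ((1/2^n : ℝ) • z - (1/2^n : ℝ) • w)
          - 2 • φ x ((1/2^n : ℝ) • z) - 2 • φ x ((1/2^n : ℝ) • w)))) Filter.atTop (nhds 0) := by
      have hb : ∀ n : ℕ, ρ ((2^(2*n) : ℝ) •
          (φ x ((1/2^n : ℝ) • z + (1/2^n : ℝ) • w) + φ x ((1/2^n : ℝ) • z - (1/2^n : ℝ) • w)
            - 2 • φ x ((1/2^n : ℝ) • z) - 2 • φ x ((1/2^n : ℝ) • w)))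
          ≤ α x 0 * (τ^(2*n) * α ((1/2^n : ℝ) • z) ((1/2^n : ℝ) • w)) := by
        intro n
        have hs := hineq x 0 ((1/2^n : ℝ) • z) ((1/2^n : ℝ) • w)
        simp only [add_zero, sub_zero] at hs
        calc ρ ((2^(2*n) : ℝ) • (φ x ((1/2^n : ℝ) • z + (1/2^n : ℝ) • w)
              + φ x ((1/2^n : ℝ) • z - (1/2^n : ℝ) • w)
              - 2 • φ x ((1/2^n : ℝ) • z) - 2 • φ x ((1/2^n : ℝ) • w)))
            ≤ τ^(2*n) * ρ (φ x ((1/2^n : ℝ) • z + (1/2^n : ℝ) • w)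
              + φ x ((1/2^n : ℝ) • z - (1/2^n : ℝ) • w)
              - 2 • φ x ((1/2^n : ℝ) • z) - 2 • φ x ((1/2^n : ℝ) • w)) := hpow (2*n) _
          _ ≤ τ^(2*n) * (α x 0 * α ((1/2^n : ℝ) • z) ((1/2^n : ℝ) • w)) :=
              mul_le_mul_of_nonneg_left hs (by positivity)
          _ = α x 0 * (τ^(2*n) * α ((1/2^n : ℝ) • z) ((1/2^n : ℝ) • w)) := by ring
      apply squeeze_zero (fun n => hnonneg _) hb
      simpa using (hlim2 z w).const_mul (α x 0)
    have Tsum := qtend _ _ (qtend _ _ (qtend _ _ (qtend _ _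
      (hHhrev x (z+w)) (hHhrev x (z-w))) (hHh2 x z)) (hHh2 x w)) T5
    have efin : (fun n : ℕ => ρ (
        (Hh x (z+w) - (2^(2*n) : ℝ) • φ x ((1/2^n : ℝ) • (z+w))) +
        (Hh x (z-w) - (2^(2*n) : ℝ) • φ x ((1/2^n : ℝ) • (z-w))) +
        (2 • ((2^(2*n) : ℝ) • φ x ((1/2^n : ℝ) • z)) - 2 • Hh x z) +
        (2 • ((2^(2*n) : ℝ) • φ x ((1/2^n : ℝ) • w)) - 2 • Hh x w) +
        ((2^(2*n) : ℝ) • (φ x ((1/2^n : ℝ) • z + (1/2^n : ℝ) • w)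
          + φ x ((1/2^n : ℝ) • z - (1/2^n : ℝ) • w)
          - 2 • φ x ((1/2^n : ℝ) • z) - 2 • φ x ((1/2^n : ℝ) • w)))))
        = fun _ : ℕ => ρ (Hh x (z+w) + Hh x (z-w) - (2 • Hh x z + 2 • Hh x w)) := by
      funext n
      congr 1
      simp only [smul_add, smul_sub, smul_comm ((2:ℝ)^(2*n)) (2:ℕ)]
      abel
    rw [efin] at Tsum
    have hE : Hh x (z+w) + Hh x (z-w) - (2 • Hh x z + 2 • Hh x w) = 0 :=
      (hzero _).mp (tendsto_nhds_unique tendsto_const_nhds Tsum)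
    exact sub_eq_zero.mp hE
  -- additivity of H in the first variable
  have addH : ∀ x y z : X, H (x+y) z = H x z + H y z := by
    intro u v z
    have half : ∀ s : X, (2:ℕ) • H ((1/2:ℝ) • s) z = H s z := by
      intro s
      have hj := jensen ((1/2:ℝ) • s) ((1/2:ℝ) • s) z
      rw [sub_self, H0, add_zero] at hj
      have e : (1/2:ℝ) • s + (1/2:ℝ) • s = s := by
        rw [← add_smul]; norm_num
      rw [e] at hj
      exact hj.symm
    have hj := jensen ((1/2:ℝ) • (u+v)) ((1/2:ℝ) • (u-v)) z
    have e1 : (1/2:ℝ) • (u+v) + (1/2:ℝ) • (u-v) = u := by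
      rw [← smul_add]
      have h2 : (u+v) + (u-v) = (2:ℝ) • u := by rw [two_smul]; abel
      rw [h2, smul_smul]; norm_num
    have e2 : (1/2:ℝ) • (u+v) - (1/2:ℝ) • (u-v) = v := by
      rw [← smul_sub]
      have h2 : (u+v) - (u-v) = (2:ℝ) • v := by rw [two_smul]; abel
      rw [h2, smul_smul]; norm_num
    rw [e1, e2, half (u+v)] at hj
    exact hj.symm
  -- scaling of additive mappings
  have add_scale : ∀ (G : X → X → Y), (∀ a b c, G (a+b) c = G a c + G b c) →
      ∀ (n : ℕ) (x z : X), G x z = (2^n : ℝ) • G ((1/2^n : ℝ) • x) z := by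
    intro G hGadd n
    induction n with
    | zero => intro x z; norm_num
    | succ n ih =>
      intro x z
      have h2 : ∀ u : X, G u z = (2:ℝ) • G ((1/2:ℝ) • u) z := by
        intro u
        have h := hGadd ((1/2:ℝ) • u) ((1/2:ℝ) • u) z
        have e : (1/2:ℝ) • u + (1/2:ℝ) • u = u := by rw [← add_smul]; norm_num
        rw [e] at h
        rw [h, two_smul]
      calc G x z = (2^n : ℝ) • G ((1/2^n : ℝ) • x) z := ih x z
        _ = (2^n : ℝ) • ((2:ℝ) • G ((1/2:ℝ) • ((1/2^n : ℝ) • x)) z) := by rw [← h2]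
        _ = (2^(n+1) : ℝ) • G ((1/2^(n+1) : ℝ) • x) z := by
            rw [smul_smul, ← pow_succ]
            congr 2
            rw [smul_smul, div_mul_div_comm, one_mul, ← pow_succ']
  -- scaling of quadratic mappings
  have quad_scale : ∀ (G : X → X → Y), (∀ a c d, G a (c+d) + G a (c-d) = 2 • G a c + 2 • G a d) →
      ∀ (n : ℕ) (x z : X), G x z = (2^(2*n) : ℝ) • G x ((1/2^n : ℝ) • z) := by
    intro G hGq
    have G0 : ∀ a : X, G a 0 = 0 := by
      intro a
      have h := hGq a 0 0
      simp only [add_zero, sub_zero] at h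
      rw [nat2] at h
      rw [← two_smul ℝ (G a 0)] at h
      have h3 : (2:ℝ) • G a 0 = 0 := left_eq_add.mp h
      have h4 := smul_eq_zero.mp h3
      exact h4.resolve_left (by norm_num)
    have double : ∀ (a : X) (c : X), G a c = (2^2 : ℝ) • G a ((1/2:ℝ) • c) := by
      intro a c
      have h := hGq a ((1/2:ℝ) • c) ((1/2:ℝ) • c)
      have e : (1/2:ℝ) • c + (1/2:ℝ) • c = c := by rw [← add_smul]; norm_num
      rw [e, sub_self, G0, add_zero] at h
      rw [h, nat2]
      rw [← two_smul ℝ ((2:ℝ) • G a ((1/2:ℝ) • c)), smul_smul]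
      norm_num
    intro n
    induction n with
    | zero => intro x z; norm_num
    | succ n ih =>
      intro x z
      calc G x z = (2^(2*n) : ℝ) • G x ((1/2^n : ℝ) • z) := ih x z
        _ = (2^(2*n) : ℝ) • ((2^2 : ℝ) • G x ((1/2:ℝ) • ((1/2^n : ℝ) • z))) := by
            rw [← double]
        _ = (2^(2*(n+1)) : ℝ) • G x ((1/2^(n+1) : ℝ) • z) := by
            rw [smul_smul, ← pow_add]
            have e : 2*n+2 = 2*(n+1) := by omega
            rw [e]
            congr 2
            rw [smul_smul, div_mul_div_comm, one_mul, ← pow_succ']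
  -- the two limits agree
  have HeqHh : ∀ x z : X, H x z = Hh x z := by
    intro x z
    set Cx : ℝ := ∑' j : ℕ,
      (τ ^ 2 / 2) ^ (j + 1) * α ((1 / 2 ^ (j + 1) : ℝ) • x) ((1 / 2 ^ (j + 1) : ℝ) • x) with hCx
    set F : ℕ → ℝ := fun j =>
      (τ ^ 3 / 2) ^ (j + 1) * α ((1 / 2 ^ (j + 1) : ℝ) • z) ((1 / 2 ^ (j + 1) : ℝ) • z) with hF
    have hCnn : 0 ≤ Cx := by
      rw [hCx]
      apply tsum_nonneg
      intro j
      exact mul_nonneg (by positivity) (hα _ _)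
    have main : ∀ n : ℕ, ρ (H x z - Hh x z) ≤
        (τ/2) * ((1/2) * Cx * (τ^(2*n) * α ((1/2^n : ℝ) • z) 0)
          + (1/(2*τ)) * (∑' j, F (n+j)) * α x 0) := by
      intro n
      have keyt : τ^(2*n) * (∑' j : ℕ, (τ^3/2)^(j+1) *
          α ((1/2^(j+1) : ℝ) • ((1/2^n : ℝ) • z)) ((1/2^(j+1) : ℝ) • ((1/2^n : ℝ) • z)))
          ≤ ∑' j, F (n+j) := by
        have e : (fun j : ℕ => (τ^3/2)^(j+1) *
            α ((1/2^(j+1) : ℝ) • ((1/2^n : ℝ) • z)) ((1/2^(j+1) : ℝ) • ((1/2^n : ℝ) • z)))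
            = fun j : ℕ => (τ^3/2)^(j+1) *
            α ((1/2^(n+j+1) : ℝ) • z) ((1/2^(n+j+1) : ℝ) • z) := by
          funext j
          rw [s2 n j z]
        rw [e, ← tsum_mul_left]
        have hsleft : Summable (fun j : ℕ => τ^(2*n) * ((τ^3/2)^(j+1) *
            α ((1/2^(n+j+1) : ℝ) • z) ((1/2^(n+j+1) : ℝ) • z))) := by
          apply Summable.mul_left
          have h2 := hsum2 ((1/2^n : ℝ) • z) ((1/2^n : ℝ) • z)
          rwa [e] at h2
        have hsright : Summable (fun j : ℕ => F (n+j)) := tail_summable (hsum2 z z) n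
        apply Summable.tsum_le_tsum _ hsleft hsright
        intro j
        rw [hF]
        calc τ^(2*n) * ((τ^3/2)^(j+1) * α ((1/2^(n+j+1) : ℝ) • z) ((1/2^(n+j+1) : ℝ) • z))
            = (τ^(2*n) * (τ^3/2)^(j+1)) * α ((1/2^(n+j+1) : ℝ) • z) ((1/2^(n+j+1) : ℝ) • z) := by
              ring
          _ ≤ (τ^3/2)^(n+j+1) * α ((1/2^(n+j+1) : ℝ) • z) ((1/2^(n+j+1) : ℝ) • z) :=
              mul_le_mul_of_nonneg_right (pw6 hτ n j) (hα _ _)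
      have hd : H x z - Hh x z = (2^(2*n) : ℝ) • (H x ((1/2^n : ℝ) • z) - Hh x ((1/2^n : ℝ) • z)) := by
        rw [smul_sub, ← quad_scale H quadH n x z, ← quad_scale Hh quadHh n x z]
      have split : H x ((1/2^n : ℝ) • z) - Hh x ((1/2^n : ℝ) • z)
          = (H x ((1/2^n : ℝ) • z) - φ x ((1/2^n : ℝ) • z))
            + (φ x ((1/2^n : ℝ) • z) - Hh x ((1/2^n : ℝ) • z)) := by abel
      have r1 : ρ (H x ((1/2^n : ℝ) • z) - φ x ((1/2^n : ℝ) • z))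
          ≤ (1/2) * Cx * α ((1/2^n : ℝ) • z) 0 := by
        have e : ρ (H x ((1/2^n : ℝ) • z) - φ x ((1/2^n : ℝ) • z))
            = ρ (φ x ((1/2^n : ℝ) • z) - H x ((1/2^n : ℝ) • z)) := by rw [← hneg, neg_sub]
        rw [e, hCx]
        exact bound1 x ((1/2^n : ℝ) • z)
      have r2 := bound2 x ((1/2^n : ℝ) • z)
      calc ρ (H x z - Hh x z)
          = ρ ((2^(2*n) : ℝ) • (H x ((1/2^n : ℝ) • z) - Hh x ((1/2^n : ℝ) • z))) := by rw [hd]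
        _ ≤ τ^(2*n) * ρ (H x ((1/2^n : ℝ) • z) - Hh x ((1/2^n : ℝ) • z)) := hpow (2*n) _
        _ ≤ τ^(2*n) * ((τ/2) * (ρ (H x ((1/2^n : ℝ) • z) - φ x ((1/2^n : ℝ) • z))
              + ρ (φ x ((1/2^n : ℝ) • z) - Hh x ((1/2^n : ℝ) • z)))) := by
            apply mul_le_mul_of_nonneg_left _ (by positivity)
            rw [split]
            exact hq _ _
        _ = (τ/2) * (τ^(2*n) * ρ (H x ((1/2^n : ℝ) • z) - φ x ((1/2^n : ℝ) • z))
              + τ^(2*n) * ρ (φ x ((1/2^n : ℝ) • z) - Hh x ((1/2^n : ℝ) • z))) := by ring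
        _ ≤ (τ/2) * ((1/2) * Cx * (τ^(2*n) * α ((1/2^n : ℝ) • z) 0)
              + (1/(2*τ)) * (∑' j, F (n+j)) * α x 0) := by
            apply mul_le_mul_of_nonneg_left _ (by positivity)
            apply add_le_add
            · calc τ^(2*n) * ρ (H x ((1/2^n : ℝ) • z) - φ x ((1/2^n : ℝ) • z))
                  ≤ τ^(2*n) * ((1/2) * Cx * α ((1/2^n : ℝ) • z) 0) :=
                    mul_le_mul_of_nonneg_left r1 (by positivity)
                _ = (1/2) * Cx * (τ^(2*n) * α ((1/2^n : ℝ) • z) 0) := by ring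
            · calc τ^(2*n) * ρ (φ x ((1/2^n : ℝ) • z) - Hh x ((1/2^n : ℝ) • z))
                  ≤ τ^(2*n) * ((1 / (2 * τ)) * (∑' j : ℕ, (τ^3/2)^(j+1) *
                      α ((1/2^(j+1) : ℝ) • ((1/2^n : ℝ) • z)) ((1/2^(j+1) : ℝ) • ((1/2^n : ℝ) • z)))
                      * α x 0) := mul_le_mul_of_nonneg_left r2 (by positivity)
                _ = (1/(2*τ)) * (τ^(2*n) * (∑' j : ℕ, (τ^3/2)^(j+1) *
                      α ((1/2^(j+1) : ℝ) • ((1/2^n : ℝ) • z)) ((1/2^(j+1) : ℝ) • ((1/2^n : ℝ) • z))))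
                      * α x 0 := by ring
                _ ≤ (1/(2*τ)) * (∑' j, F (n+j)) * α x 0 := by
                    apply mul_le_mul_of_nonneg_right _ (hα x 0)
                    apply mul_le_mul_of_nonneg_left keyt (by positivity)
    have tnd : Filter.Tendsto (fun n : ℕ =>
        (τ/2) * ((1/2) * Cx * (τ^(2*n) * α ((1/2^n : ℝ) • z) 0)
          + (1/(2*τ)) * (∑' j, F (n+j)) * α x 0)) Filter.atTop (nhds 0) := by
      have T1 : Filter.Tendsto (fun n : ℕ => τ^(2*n) * α ((1/2^n : ℝ) • z) 0)
          Filter.atTop (nhds 0) := by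
        have := hlim2 z 0
        simpa using this
      have p1 : Filter.Tendsto (fun n : ℕ => (1/2) * Cx * (τ^(2*n) * α ((1/2^n : ℝ) • z) 0))
          Filter.atTop (nhds 0) := by
        simpa using T1.const_mul ((1/2) * Cx)
      have p2 : Filter.Tendsto (fun n : ℕ => (1/(2*τ)) * (∑' j, F (n+j)) * α x 0)
          Filter.atTop (nhds 0) := by
        have := ((tail_tendsto F).const_mul (1/(2*τ))).mul_const (α x 0)
        simpa [mul_assoc] using this
      have := (p1.add p2).const_mul (τ/2)
      simpa using this
    have h0 : ρ (H x z - Hh x z) ≤ 0 := ge_of_tendsto' tnd main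
    have := (hzero _).mp (le_antisymm h0 (hnonneg _))
    exact sub_eq_zero.mp this
  refine ⟨H, ⟨⟨addH, quadH⟩, ?_⟩, ?_⟩
  · intro x z
    apply le_min
    · exact bound1 x z
    · rw [HeqHh x z]
      exact bound2 x z
  · rintro H' ⟨⟨hadd', hquad'⟩, hbd'⟩
    funext x z
    set F1 : ℕ → ℝ := fun j =>
      (τ ^ 2 / 2) ^ (j + 1) * α ((1 / 2 ^ (j + 1) : ℝ) • x) ((1 / 2 ^ (j + 1) : ℝ) • x) with hF1
    have keyt : ∀ n : ℕ, τ^n * (∑' j : ℕ, (τ^2/2)^(j+1) *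
        α ((1/2^(j+1) : ℝ) • ((1/2^n : ℝ) • x)) ((1/2^(j+1) : ℝ) • ((1/2^n : ℝ) • x)))
        ≤ ∑' j, F1 (n+j) := by
      intro n
      have e : (fun j : ℕ => (τ^2/2)^(j+1) *
          α ((1/2^(j+1) : ℝ) • ((1/2^n : ℝ) • x)) ((1/2^(j+1) : ℝ) • ((1/2^n : ℝ) • x)))
          = fun j : ℕ => (τ^2/2)^(j+1) *
          α ((1/2^(n+j+1) : ℝ) • x) ((1/2^(n+j+1) : ℝ) • x) := by
        funext j
        rw [s2 n j x]
      rw [e, ← tsum_mul_left]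
      have hsleft : Summable (fun j : ℕ => τ^n * ((τ^2/2)^(j+1) *
          α ((1/2^(n+j+1) : ℝ) • x) ((1/2^(n+j+1) : ℝ) • x))) := by
        apply Summable.mul_left
        have h2 := hsum1 ((1/2^n : ℝ) • x) ((1/2^n : ℝ) • x)
        rwa [e] at h2
      have hsright : Summable (fun j : ℕ => F1 (n+j)) := tail_summable (hsum1 x x) n
      apply Summable.tsum_le_tsum _ hsleft hsright
      intro j
      rw [hF1]
      calc τ^n * ((τ^2/2)^(j+1) * α ((1/2^(n+j+1) : ℝ) • x) ((1/2^(n+j+1) : ℝ) • x))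
          = (τ^n * (τ^2/2)^(j+1)) * α ((1/2^(n+j+1) : ℝ) • x) ((1/2^(n+j+1) : ℝ) • x) := by
            ring
        _ ≤ (τ^2/2)^(n+j+1) * α ((1/2^(n+j+1) : ℝ) • x) ((1/2^(n+j+1) : ℝ) • x) :=
            mul_le_mul_of_nonneg_right (pw5 hτ n j) (hα _ _)
    have main : ∀ n : ℕ, ρ (H' x z - H x z) ≤
        (τ/2) * ((1/2) * (∑' j, F1 (n+j)) * α z 0 + (1/2) * (∑' j, F1 (n+j)) * α z 0) := by
      intro n
      have hB' : ρ (H' ((1/2^n : ℝ) • x) z - φ ((1/2^n : ℝ) • x) z) ≤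
          (1/2) * (∑' j : ℕ, (τ^2/2)^(j+1) *
            α ((1/2^(j+1) : ℝ) • ((1/2^n : ℝ) • x)) ((1/2^(j+1) : ℝ) • ((1/2^n : ℝ) • x)))
            * α z 0 := by
        have e : ρ (H' ((1/2^n : ℝ) • x) z - φ ((1/2^n : ℝ) • x) z)
            = ρ (φ ((1/2^n : ℝ) • x) z - H' ((1/2^n : ℝ) • x) z) := by rw [← hneg, neg_sub]
        rw [e]
        exact le_trans (hbd' ((1/2^n : ℝ) • x) z) (min_le_left _ _)
      have hB : ρ (φ ((1/2^n : ℝ) • x) z - H ((1/2^n : ℝ) • x) z) ≤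
          (1/2) * (∑' j : ℕ, (τ^2/2)^(j+1) *
            α ((1/2^(j+1) : ℝ) • ((1/2^n : ℝ) • x)) ((1/2^(j+1) : ℝ) • ((1/2^n : ℝ) • x)))
            * α z 0 := bound1 ((1/2^n : ℝ) • x) z
      have hd : H' x z - H x z = (2^n : ℝ) • (H' ((1/2^n : ℝ) • x) z - H ((1/2^n : ℝ) • x) z) := by
        rw [smul_sub, ← add_scale H' hadd' n x z, ← add_scale H addH n x z]
      have split : H' ((1/2^n : ℝ) • x) z - H ((1/2^n : ℝ) • x) z
          = (H' ((1/2^n : ℝ) • x) z - φ ((1/2^n : ℝ) • x) z)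
            + (φ ((1/2^n : ℝ) • x) z - H ((1/2^n : ℝ) • x) z) := by abel
      have hcmono : ∀ r s : ℝ,
          r ≤ s → τ^n * r ≤ τ^n * s := fun r s h =>
        mul_le_mul_of_nonneg_left h (by positivity)
      calc ρ (H' x z - H x z)
          = ρ ((2^n : ℝ) • (H' ((1/2^n : ℝ) • x) z - H ((1/2^n : ℝ) • x) z)) := by rw [hd]
        _ ≤ τ^n * ρ (H' ((1/2^n : ℝ) • x) z - H ((1/2^n : ℝ) • x) z) := hpow n _
        _ ≤ τ^n * ((τ/2) * (ρ (H' ((1/2^n : ℝ) • x) z - φ ((1/2^n : ℝ) • x) z)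
              + ρ (φ ((1/2^n : ℝ) • x) z - H ((1/2^n : ℝ) • x) z))) := by
            apply hcmono
            rw [split]
            exact hq _ _
        _ ≤ τ^n * ((τ/2) * ((1/2) * (∑' j : ℕ, (τ^2/2)^(j+1) *
              α ((1/2^(j+1) : ℝ) • ((1/2^n : ℝ) • x)) ((1/2^(j+1) : ℝ) • ((1/2^n : ℝ) • x)))
              * α z 0 + (1/2) * (∑' j : ℕ, (τ^2/2)^(j+1) *
              α ((1/2^(j+1) : ℝ) • ((1/2^n : ℝ) • x)) ((1/2^(j+1) : ℝ) • ((1/2^n : ℝ) • x)))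
              * α z 0)) := by
            apply hcmono
            apply mul_le_mul_of_nonneg_left (add_le_add hB' hB) (by positivity)
        _ = (τ/2) * ((1/2) * (τ^n * (∑' j : ℕ, (τ^2/2)^(j+1) *
              α ((1/2^(j+1) : ℝ) • ((1/2^n : ℝ) • x)) ((1/2^(j+1) : ℝ) • ((1/2^n : ℝ) • x))))
              * α z 0 + (1/2) * (τ^n * (∑' j : ℕ, (τ^2/2)^(j+1) *
              α ((1/2^(j+1) : ℝ) • ((1/2^n : ℝ) • x)) ((1/2^(j+1) : ℝ) • ((1/2^n : ℝ) • x))))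
              * α z 0) := by ring
        _ ≤ (τ/2) * ((1/2) * (∑' j, F1 (n+j)) * α z 0 + (1/2) * (∑' j, F1 (n+j)) * α z 0) := by
            apply mul_le_mul_of_nonneg_left _ (by positivity)
            apply add_le_add
            · apply mul_le_mul_of_nonneg_right _ (hα z 0)
              apply mul_le_mul_of_nonneg_left (keyt n) (by norm_num)
            · apply mul_le_mul_of_nonneg_right _ (hα z 0)
              apply mul_le_mul_of_nonneg_left (keyt n) (by norm_num)
    have tnd : Filter.Tendsto (fun n : ℕ =>
        (τ/2) * ((1/2) * (∑' j, F1 (n+j)) * α z 0 + (1/2) * (∑' j, F1 (n+j)) * α z 0))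
        Filter.atTop (nhds 0) := by
      have p1 : Filter.Tendsto (fun n : ℕ => (1/2) * (∑' j, F1 (n+j)) * α z 0)
          Filter.atTop (nhds 0) := by
        have := ((tail_tendsto F1).const_mul (1/2)).mul_const (α z 0)
        simpa [mul_assoc] using this
      have := (p1.add p1).const_mul (τ/2)
      simpa using this
    have h0 : ρ (H' x z - H x z) ≤ 0 := ge_of_tendsto' tnd main
    have := (hzero _).mp (le_antisymm h0 (hnonneg _))
    exact sub_eq_zero.mp this
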